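/- arXiv:2206.14429 — 8 statements merged into one kernel-verified Lean document; each statement's English description precedes it below -/
import Mathlib

section
/- The truncated leverage function max(1, lev_i(y_i, y_{-i})) is monotonically decreasing in the other agents' strategies: if y_{-i} ≤ y'_{-i} pointwise, then max(1, lev_i(y_i, y_{-i})) ≥ max(1, lev_i(y_i, y'_{-i})). -/
/-!
Raising the other agents' holdings raises every price, so both the marked-to-market assets
`a` and the liquidation value `Δ` of agent `i` increase. If the leverage `a / (a + Δ - l)` exceeds
`1`, then `Δ - l < 0`, and in that regime the leverage decreases both in `a` and in `Δ`.
-/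

open Finset

lemma max_one_div_le_max_one_div_of_le {A A' D D' L : ℝ} (hA : 0 ≤ A) (hAA' : A ≤ A')
    (hDD' : D ≤ D') (hE : 0 < A + D - L) (hE' : 0 < A' + D' - L) :
    max 1 (A' / (A' + D' - L)) ≤ max 1 (A / (A + D - L)) := by
  rcases le_or_gt (A' / (A' + D' - L)) 1 with hle | hgt
  · exact max_le (le_max_left _ _) (hle.trans (le_max_left _ _))
  · have hDL' : D' - L < 0 := by
      rw [one_lt_div hE'] at hgt
      linarith
    -- `A ↦ A / (A + c)` is antitone for `c < 0`, and `c ↦ A / (A + c)` is antitone for `A ≥ 0`.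
    have hlev : A' / (A' + D' - L) ≤ A / (A + D - L) :=
      calc A' / (A' + D' - L) ≤ A / (A + D' - L) := by
            rw [div_le_div_iff₀ hE' (by linarith)]
            nlinarith [mul_le_mul_of_nonpos_right hAA' hDL'.le]
        _ ≤ A / (A + D - L) := by gcongr
    exact max_le (le_max_left _ _) (hlev.trans (le_max_right _ _))

lemma le_apply_sum_mul_of_le {N : Type*} [Fintype N] {f : ℝ → ℝ} (hf : Monotone f)
    {w y y' : N → ℝ} (hw : ∀ k, 0 ≤ w k) (hyy' : y ≤ y') :
    f (∑ k, w k * y k) ≤ f (∑ k, w k * y' k) :=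
  hf <| sum_le_sum fun k _ => mul_le_mul_of_nonneg_left (hyy' k) (hw k)

lemma nonneg_apply_sum_mul {N : Type*} [Fintype N] {f : ℝ → ℝ} (hf : Monotone f)
    (hf0 : f 0 = 0) {w y : N → ℝ} (hw : ∀ k, 0 ≤ w k) (hy : ∀ k, 0 ≤ y k) :
    0 ≤ f (∑ k, w k * y k) :=
  hf0 ▸ hf (sum_nonneg fun k _ => mul_nonneg (hw k) (hy k))

theorem stmt_0_general {N M : Type*} [Fintype N] [Fintype M]
    (x : N → M → ℝ) (aI l : N → ℝ) (α : ℝ)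
    (pfun : M → ℝ → ℝ) (p0 : M → ℝ)
    (hx : ∀ i j, x i j ∈ Set.Icc (0:ℝ) 1)
    (haI : ∀ i, 0 < aI i)
    (hα : α ∈ Set.Icc (0:ℝ) 1)
    (hmono : ∀ j, Monotone (pfun j))
    (hpfun0 : ∀ j, pfun j 0 = 0)
    -- model quantities
    (price : (N → ℝ) → M → ℝ)
    (hprice : ∀ y j, price y j = pfun j (∑ i, x i j * y i))
    (a : N → (N → ℝ) → ℝ)
    (ha : ∀ i y, a i y = aI i + y i * ∑ j, x i j * price y j)
    (Δ : N → (N → ℝ) → ℝ)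
    (hΔ : ∀ i y, Δ i y = (1 - y i) * ∑ j, x i j * ((1 - α) * p0 j + α * price y j))
    (e : N → (N → ℝ) → ℝ)
    (he : ∀ i y, e i y = a i y + Δ i y - l i)
    (lev : N → (N → ℝ) → ℝ)
    (hlev : ∀ i y, lev i y = a i y / e i y)
    -- the comparison
    (i : N) (y y' : N → ℝ)
    (hy : ∀ k, y k ∈ Set.Icc (0:ℝ) 1)
    (hyi : y i = y' i) (hle : ∀ k, k ≠ i → y k ≤ y' k)
    (hepos : 0 < e i y) (hepos' : 0 < e i y') :
    max 1 (lev i y') ≤ max 1 (lev i y) := by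
  have hx0 : ∀ k j, 0 ≤ x k j := fun k j => (hx k j).1
  have hyy' : y ≤ y' := fun k => by
    by_cases hk : k = i
    · exact hk ▸ hyi.le
    · exact hle k hk
  have hprice_le : ∀ j, price y j ≤ price y' j := fun j => by
    simpa only [hprice] using le_apply_sum_mul_of_le (hmono j) (hx0 · j) hyy'
  have hprice_nonneg : ∀ j, 0 ≤ price y j := fun j => by
    simpa only [hprice] using nonneg_apply_sum_mul (hmono j) (hpfun0 j) (hx0 · j) (hy · |>.1)
  have ha_nonneg : 0 ≤ a i y := by
    rw [ha]
    exact add_nonneg (haI i).le <|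
      mul_nonneg (hy i).1 <| sum_nonneg fun j _ => mul_nonneg (hx0 i j) (hprice_nonneg j)
  have ha_le : a i y ≤ a i y' := by
    rw [ha, ha, ← hyi]
    gcongr with j
    · exact (hy i).1
    · exact hx0 i j
    · exact hprice_le j
  have hΔ_le : Δ i y ≤ Δ i y' := by
    rw [hΔ, hΔ, ← hyi]
    gcongr with j
    · exact sub_nonneg.2 (hy i).2
    · exact hx0 i j
    · exact hα.1
    · exact hprice_le j
  rw [he] at hepos hepos'
  rw [hlev, hlev, he, he]
  exact max_one_div_le_max_one_div_of_le ha_nonneg ha_le hΔ_le hepos hepos'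

/-- The truncated leverage `max 1 (lev i y)` is monotonically
decreasing in the other agents' strategies. -/
theorem stmt_0 {N M : Type*} [Fintype N] [Fintype M]
    (x : N → M → ℝ) (aI l : N → ℝ) (α : ℝ)
    (pfun : M → ℝ → ℝ) (p0 : M → ℝ)
    (hx : ∀ i j, x i j ∈ Set.Icc (0:ℝ) 1)
    (haI : ∀ i, 0 < aI i) (hl : ∀ i, 0 ≤ l i)
    (hα : α ∈ Set.Icc (0:ℝ) 1)
    (hmono : ∀ j, Monotone (pfun j))
    (hpfun0 : ∀ j, pfun j 0 = 0) (hpfun1 : ∀ j, pfun j 1 = p0 j)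
    (hp0pos : ∀ j, 0 < p0 j)
    -- model quantities
    (price : (N → ℝ) → M → ℝ)
    (hprice : ∀ y j, price y j = pfun j (∑ i, x i j * y i))
    (a : N → (N → ℝ) → ℝ)
    (ha : ∀ i y, a i y = aI i + y i * ∑ j, x i j * price y j)
    (Δ : N → (N → ℝ) → ℝ)
    (hΔ : ∀ i y, Δ i y = (1 - y i) * ∑ j, x i j * ((1 - α) * p0 j + α * price y j))
    (e : N → (N → ℝ) → ℝ)
    (he : ∀ i y, e i y = a i y + Δ i y - l i)
    (lev : N → (N → ℝ) → ℝ)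
    (hlev : ∀ i y, lev i y = a i y / e i y)
    -- the comparison
    (i : N) (y y' : N → ℝ)
    (hy : ∀ k, y k ∈ Set.Icc (0:ℝ) 1) (hy' : ∀ k, y' k ∈ Set.Icc (0:ℝ) 1)
    (hyi : y i = y' i) (hle : ∀ k, k ≠ i → y k ≤ y' k)
    (hepos : 0 < e i y) (hepos' : 0 < e i y') :
    max 1 (lev i y') ≤ max 1 (lev i y) :=
  stmt_0_general x aI l α pfun p0 hx haI hα hmono hpfun0 price hprice a ha Δ hΔ e he lev hlev i y y'
    hy hyi hle hepos hepos'
end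

section
/- For fixed strategies y_{-i} of the other agents and convex increasing price impact functions p_j, the equity e_i(y_i, y_{-i}) is a convex function of the agent's own strategy y_i ∈ [0,1]. -/
lemma convexOn_affine (s : Set ℝ) (hs : Convex ℝ s) (a b : ℝ) :
    ConvexOn ℝ s (fun t => a + b * t) := by
  refine ⟨hs, ?_⟩
  intro u hu v hv μ ν hμ hν hμν
  simp only [smul_eq_mul]
  have : a + b * (μ * u + ν * v) = μ * (a + b * u) + ν * (a + b * v) := by
    linear_combination (-a) * hμν
  linarith [this.le]

lemma convexOn_affine_mul (a b : ℝ) (hb : 0 ≤ b) (P : ℝ → ℝ)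
    (hP : ConvexOn ℝ (Set.Icc 0 1) P) (hPm : MonotoneOn P (Set.Icc 0 1))
    (hL : ∀ t ∈ Set.Icc (0:ℝ) 1, 0 ≤ a + b * t) :
    ConvexOn ℝ (Set.Icc 0 1) (fun t => (a + b * t) * P t) := by
  refine ⟨convex_Icc _ _, ?_⟩
  intro u hu v hv μ ν hμ hν hμν
  simp only [smul_eq_mul]
  have hm : μ * u + ν * v ∈ Set.Icc (0:ℝ) 1 := by
    have := (convex_Icc (0:ℝ) 1) hu hv hμ hν hμν
    simpa [smul_eq_mul] using this
  have hP2 : P (μ * u + ν * v) ≤ μ * P u + ν * P v := by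
    have := hP.2 hu hv hμ hν hμν
    simpa [smul_eq_mul] using this
  have hLm : 0 ≤ a + b * (μ * u + ν * v) := hL _ hm
  have step1 : (a + b * (μ * u + ν * v)) * P (μ * u + ν * v)
      ≤ (a + b * (μ * u + ν * v)) * (μ * P u + ν * P v) :=
    mul_le_mul_of_nonneg_left hP2 hLm
  have hmono2 : 0 ≤ (u - v) * (P u - P v) := by
    rcases le_total u v with h | h
    · have := hPm hu hv h
      nlinarith
    · have := hPm hv hu h
      nlinarith
  have hν' : ν = 1 - μ := by linarith
  subst hν'
  have key : μ * ((a + b * u) * P u) + (1 - μ) * ((a + b * v) * P v)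
      - (a + b * (μ * u + (1 - μ) * v)) * (μ * P u + (1 - μ) * P v)
      = μ * (1 - μ) * (b * ((u - v) * (P u - P v))) := by ring
  nlinarith [mul_nonneg (mul_nonneg hμ hν) (mul_nonneg hb hmono2)]


lemma convexOn_finset_sum {ι : Type*} (s : Finset ι) (f : ι → ℝ → ℝ)
    (h : ∀ j ∈ s, ConvexOn ℝ (Set.Icc (0:ℝ) 1) (f j)) :
    ConvexOn ℝ (Set.Icc (0:ℝ) 1) (fun t => ∑ j ∈ s, f j t) := by
  have : (fun t => ∑ j ∈ s, f j t) = ∑ j ∈ s, f j := by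
    funext t; simp [Finset.sum_apply]
  rw [this]
  exact Finset.sum_induction f _ (fun a b ha hb => ha.add hb)
    (convexOn_const 0 (convex_Icc _ _)) h

/-- With convex increasing price impact, the equity
`e i (y_i, y_{-i})` is convex in the agent's own strategy `y_i ∈ [0,1]`. -/
theorem stmt_3 {N M : Type*} [Fintype N] [DecidableEq N] [Fintype M]
    (x : N → M → ℝ) (aI l : N → ℝ) (α : ℝ)
    (pfun : M → ℝ → ℝ) (p0 : M → ℝ)
    (hx : ∀ i j, 0 ≤ x i j)
    (hxsum : ∀ j, ∑ i, x i j ≤ 1)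
    (hα : α ∈ Set.Icc (0:ℝ) 1)
    (hconv : ∀ j, ConvexOn ℝ (Set.Icc 0 1) (pfun j))
    (hmono : ∀ j, MonotoneOn (pfun j) (Set.Icc 0 1))
    (hdiff : ∀ j, DifferentiableOn ℝ (pfun j) (Set.Icc 0 1))
    (hp0 : ∀ j, pfun j 1 = p0 j)
    (price : (N → ℝ) → M → ℝ)
    (hprice : ∀ y j, price y j = pfun j (∑ i, x i j * y i))
    (e : N → (N → ℝ) → ℝ)
    (he : ∀ i y, e i y = aI i + y i * (∑ j, x i j * price y j) +
      (1 - y i) * (∑ j, x i j * ((1 - α) * p0 j + α * price y j)) - l i)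
    (i : N) (y : N → ℝ) (hy : ∀ k, y k ∈ Set.Icc (0:ℝ) 1) :
    ConvexOn ℝ (Set.Icc 0 1) (fun t => e i (Function.update y i t)) := by
  obtain ⟨hα0, hα1⟩ := hα
  -- the "other agents" contribution to asset j
  set c : M → ℝ := fun j => ∑ k ∈ Finset.univ \ {i}, x k j * y k with hc
  -- sum identity
  have hsum : ∀ t j, ∑ k, x k j * Function.update y i t k = c j + x i j * t := by
    intro t j
    have hfun : (fun k => x k j * Function.update y i t k)
        = Function.update (fun k => x k j * y k) i (x i j * t) := by
      funext k
      by_cases hk : k = i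
      · subst hk; simp
      · simp [Function.update_of_ne hk]
    rw [hfun, Finset.sum_update_of_mem (Finset.mem_univ i)]
    ring
  have hc0 : ∀ j, 0 ≤ c j := by
    intro j
    exact Finset.sum_nonneg fun k _ => mul_nonneg (hx k j) (hy k).1
  have hcx : ∀ j, c j + x i j ≤ 1 := by
    intro j
    have h1 : c j ≤ ∑ k ∈ Finset.univ \ {i}, x k j := by
      refine Finset.sum_le_sum fun k _ => ?_
      nlinarith [(hy k).2, hx k j]
    have h2 : (∑ k ∈ Finset.univ \ {i}, x k j) + x i j = ∑ k, x k j := by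
      rw [Finset.sum_eq_sum_sdiff_singleton_add (Finset.mem_univ i) (fun k => x k j)]
    have := hxsum j
    linarith
  have hmaps : ∀ j, ∀ t ∈ Set.Icc (0:ℝ) 1, c j + x i j * t ∈ Set.Icc (0:ℝ) 1 := by
    intro j t ht
    constructor
    · exact add_nonneg (hc0 j) (mul_nonneg (hx i j) ht.1)
    · have : x i j * t ≤ x i j := by nlinarith [hx i j, ht.2]
      linarith [hcx j]
  -- convexity and monotonicity of t ↦ pfun j (c j + x i j * t) on [0,1]
  have hPconv : ∀ j, ConvexOn ℝ (Set.Icc 0 1) (fun t => pfun j (c j + x i j * t)) := by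
    intro j
    refine ⟨convex_Icc _ _, ?_⟩
    intro u hu v hv μ ν hμ hν hμν
    simp only [smul_eq_mul]
    have harg : c j + x i j * (μ * u + ν * v)
        = μ * (c j + x i j * u) + ν * (c j + x i j * v) := by
      linear_combination (-(c j)) * hμν
    rw [harg]
    have := (hconv j).2 (hmaps j u hu) (hmaps j v hv) hμ hν hμν
    simpa [smul_eq_mul] using this
  have hPmono : ∀ j, MonotoneOn (fun t => pfun j (c j + x i j * t)) (Set.Icc 0 1) := by
    intro j u hu v hv huv
    exact hmono j (hmaps j u hu) (hmaps j v hv)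
      (by nlinarith [hx i j])
  -- rewrite e pointwise
  have key : ∀ t, e i (Function.update y i t)
      = (aI i - l i) + ∑ j, (x i j * ((1 - α) * p0 j)
          + (x i j * (-(1 - α) * p0 j)) * t
          + (x i j * α + x i j * (1 - α) * t) * pfun j (c j + x i j * t)) := by
    intro t
    rw [he]
    simp only [hprice, hsum, Function.update_self]
    rw [Finset.mul_sum, Finset.mul_sum]
    have hAB : (∑ j, t * (x i j * pfun j (c j + x i j * t)))
        + (∑ j, (1 - t) * (x i j * ((1 - α) * p0 j + α * pfun j (c j + x i j * t))))
        = ∑ j, (x i j * ((1 - α) * p0 j) + (x i j * (-(1 - α) * p0 j)) * t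
          + (x i j * α + x i j * (1 - α) * t) * pfun j (c j + x i j * t)) := by
      rw [← Finset.sum_add_distrib]
      exact Finset.sum_congr rfl fun j _ => by ring
    linarith [hAB]
  have hk : (fun t => e i (Function.update y i t))
      = fun t => (aI i - l i) + ∑ j, (x i j * ((1 - α) * p0 j)
          + (x i j * (-(1 - α) * p0 j)) * t
          + (x i j * α + x i j * (1 - α) * t) * pfun j (c j + x i j * t)) :=
    funext key
  rw [hk]
  -- convexity of the explicit expression
  have hconst : ConvexOn ℝ (Set.Icc (0:ℝ) 1) (fun _ : ℝ => aI i - l i) :=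
    convexOn_const _ (convex_Icc _ _)
  refine hconst.add ?_
  have : ∀ j : M, ConvexOn ℝ (Set.Icc (0:ℝ) 1)
      (fun t => x i j * ((1 - α) * p0 j) + (x i j * (-(1 - α) * p0 j)) * t
        + (x i j * α + x i j * (1 - α) * t) * pfun j (c j + x i j * t)) := by
    intro j
    refine (convexOn_affine _ (convex_Icc _ _) _ _).add ?_
    refine convexOn_affine_mul _ _ ?_ _ (hPconv j) (hPmono j) ?_
    · exact mul_nonneg (hx i j) (by linarith)
    · intro t ht
      have h1 : 0 ≤ x i j * α := mul_nonneg (hx i j) hα0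
      have h2 : 0 ≤ x i j * (1 - α) * t :=
        mul_nonneg (mul_nonneg (hx i j) (by linarith)) ht.1
      linarith
  exact convexOn_finset_sum Finset.univ _ (fun j _ => this j)
end

section
/- For α = 1 and linear price impact, Ψ_i(y) := min(1, max(0, g_i(y))) (and Ψ_i(y) := 0 if e_i(y) ≤ 0) is the maximal ỹ_i ∈ [0,1] such that ẽ_i(ỹ_i, y) > 0 and l̃ev_i(ỹ_i, y) ≤ λ, if such ỹ_i exists, and equals 0 otherwise. -/
/-- For `α = 1` and linear price impact,
`Ψ = min 1 (max 0 g)` (and `Ψ = 0` if `ẽ ≤ 0`) is the maximal `ỹ ∈ [0,1]` such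
that `ẽ(ỹ) > 0` and the simplified leverage `(aI + ỹ V)/ẽ ≤ λ`, if such a `ỹ`
exists; otherwise `Ψ = 0`. -/
theorem stmt_10 (aI l lam V : ℝ)
    (haI : 0 < aI) (hl : 0 ≤ l) (hlam : 1 < lam) (hV : 0 < V)
    (etil g Ψ : ℝ)
    (hetil : etil = aI - l + V)
    (hg : g = lam - (lam * l - (lam - 1) * aI) / V)
    (hΨ : Ψ = if etil ≤ 0 then 0 else min 1 (max 0 g)) :
    ((∃ t ∈ Set.Icc (0:ℝ) 1, 0 < etil ∧ (aI + t * V) / etil ≤ lam) →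
      IsGreatest {t ∈ Set.Icc (0:ℝ) 1 | 0 < etil ∧ (aI + t * V) / etil ≤ lam} Ψ) ∧
    ((¬ ∃ t ∈ Set.Icc (0:ℝ) 1, 0 < etil ∧ (aI + t * V) / etil ≤ lam) → Ψ = 0) := by
  have hVne : V ≠ 0 := ne_of_gt hV
  have hgV : g * V = lam * etil - aI := by
    subst hetil hg; field_simp; ring
  constructor
  · rintro ⟨t, ⟨ht0, ht1⟩, hepos, hle⟩
    have hle' : aI + t * V ≤ lam * etil := by rwa [div_le_iff₀ hepos] at hle
    have hg0 : 0 ≤ g := by nlinarith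
    have hΨ' : Ψ = min 1 g := by
      rw [hΨ, if_neg (not_le.mpr hepos), max_eq_right hg0]
    constructor
    · refine ⟨⟨?_, ?_⟩, hepos, ?_⟩
      · rw [hΨ']; exact le_min zero_le_one hg0
      · rw [hΨ']; exact min_le_left _ _
      · rw [div_le_iff₀ hepos, hΨ']
        have h1 : min 1 g ≤ g := min_le_right _ _
        nlinarith
    · rintro s ⟨⟨hs0, hs1⟩, _, hsle⟩
      rw [div_le_iff₀ hepos] at hsle
      have hsg : s ≤ g := by nlinarith
      rw [hΨ']; exact le_min hs1 hsg
  · intro hne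
    by_cases he : etil ≤ 0
    · rw [hΨ, if_pos he]
    · push_neg at he
      have hg0 : g ≤ 0 := by
        by_contra hgpos
        push_neg at hgpos
        exact hne ⟨0, ⟨le_refl _, zero_le_one⟩, he, by
          rw [div_le_iff₀ he]; nlinarith⟩
      rw [hΨ, if_neg (not_le.mpr he), max_eq_left hg0, min_eq_right (le_refl 0 |>.trans zero_le_one)]
end

section
/- For α = 1 and linear price impact, the simplified best-response map Ψ : [0,1]^N → [0,1]^N is monotone (with respect to the pointwise order) and continuous. -/
/-- For `α = 1` and linear price impact, the simplified
best-response map `Ψ` is monotone (pointwise order) and continuous on the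
strategy space `[0,1]^N`. (At `V_i(y) = 0` the value of `Ψ_i` is the limiting
value of the clamped formula `min 1 (max 0 (g_i(y)))` as `V_i(y) → 0⁺`.) -/
theorem stmt_11 {N M : Type*} [Fintype N] [Fintype M]
    (x : N → M → ℝ) (aI l : N → ℝ) (p0 : M → ℝ) (lam : ℝ)
    (hx : ∀ i j, 0 ≤ x i j) (haI : ∀ i, 0 < aI i) (hl : ∀ i, 0 ≤ l i)
    (hp0 : ∀ j, 0 < p0 j) (hlam : 1 < lam)
    (V : N → (N → ℝ) → ℝ)
    (hV : ∀ i y, V i y = ∑ j, x i j * (p0 j * ∑ k, x k j * y k))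
    (e : N → (N → ℝ) → ℝ)
    (he : ∀ i y, e i y = aI i - l i + V i y)
    (g : N → (N → ℝ) → ℝ)
    (hg : ∀ i y, g i y = lam - (lam * l i - (lam - 1) * aI i) / V i y)
    (Ψ : (N → ℝ) → (N → ℝ))
    (hΨ₀ : ∀ i y, e i y ≤ 0 → Ψ y i = 0)
    (hΨ₁ : ∀ i y, 0 < e i y → 0 < V i y → Ψ y i = min 1 (max 0 (g i y)))
    (hΨ₂ : ∀ i y, 0 < e i y → V i y = 0 →
      Ψ y i = if lam * l i - (lam - 1) * aI i ≤ 0 then 1 else 0)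
    (box : Set (N → ℝ)) (hbox : box = {y | ∀ k, y k ∈ Set.Icc (0:ℝ) 1}) :
    MonotoneOn Ψ box ∧ ContinuousOn Ψ box := by
  have hlam0 : (0:ℝ) < lam := by linarith
  set c : N → ℝ := fun i => lam * l i - (lam - 1) * aI i with hc
  set Φ : (N → ℝ) → N → ℝ := fun y i =>
    if c i ≤ 0 then 1
    else min 1 (max 0 (lam - c i / max (V i y) (c i / (2 * lam)))) with hΦ
  -- nonnegativity of V on the box
  have hVnn : ∀ i (y : N → ℝ), (∀ k, 0 ≤ y k) → 0 ≤ V i y := by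
    intro i y hy
    rw [hV]
    refine Finset.sum_nonneg fun j _ => ?_
    have h1 : 0 ≤ ∑ k, x k j * y k :=
      Finset.sum_nonneg fun k _ => mul_nonneg (hx k j) (hy k)
    exact mul_nonneg (hx i j) (mul_nonneg (hp0 j).le h1)
  -- key identity: Ψ = Φ on box
  have key : ∀ y ∈ box, ∀ i, Ψ y i = Φ y i := by
    intro y hy i
    rw [hbox] at hy
    have hy0 : ∀ k, 0 ≤ y k := fun k => (hy k).1
    have hVn : 0 ≤ V i y := hVnn i y hy0
    by_cases hci : c i ≤ 0
    · -- c i ≤ 0 : Φ = 1 and Ψ = 1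
      have hli : l i < aI i := by
        have h2 : lam * l i - (lam - 1) * aI i ≤ 0 := hci
        have := haI i
        nlinarith [hl i]
      have he' : 0 < e i y := by rw [he]; linarith
      simp only [hΦ, if_pos hci]
      rcases eq_or_lt_of_le hVn with hV0 | hV0
      · rw [hΨ₂ i y he' hV0.symm, if_pos hci]
      · rw [hΨ₁ i y he' hV0, hg]
        have hdiv : c i / V i y ≤ 0 := div_nonpos_of_nonpos_of_nonneg hci hVn
        have h1 : (1:ℝ) ≤ lam - c i / V i y := by linarith
        rw [max_eq_right (by linarith : (0:ℝ) ≤ lam - c i / V i y),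
          min_eq_left h1]
    · push_neg at hci
      have hk : 0 < c i / (2 * lam) := by positivity
      have hkm : 0 < max (V i y) (c i / (2 * lam)) :=
        lt_of_lt_of_le hk (le_max_right _ _)
      simp only [hΦ, if_neg (not_le.mpr hci)]
      rcases eq_or_lt_of_le hVn with hV0 | hVpos
      · -- V = 0
        have hmax : max (V i y) (c i / (2 * lam)) = c i / (2 * lam) :=
          max_eq_right (by rw [← hV0]; exact hk.le)
        have hdd : c i / (c i / (2 * lam)) = 2 * lam := by
          field_simp
        rw [hmax, hdd]
        have : max (0:ℝ) (lam - 2 * lam) = 0 := max_eq_left (by linarith)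
        rw [this, min_eq_right (by linarith : (0:ℝ) ≤ 1)]
        by_cases hei : 0 < e i y
        · rw [hΨ₂ i y hei hV0.symm, if_neg (not_le.mpr hci)]
        · exact hΨ₀ i y (le_of_not_gt hei)
      · -- V > 0
        by_cases hei : 0 < e i y
        · rw [hΨ₁ i y hei hVpos, hg]
          by_cases hVk : c i / (2 * lam) ≤ V i y
          · rw [max_eq_left hVk]
          · push_neg at hVk
            -- both sides are 0
            have h2 : 2 * lam < c i / V i y := by
              rw [lt_div_iff₀ hVpos]
              calc 2 * lam * V i y < 2 * lam * (c i / (2 * lam)) := by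
                    exact mul_lt_mul_of_pos_left hVk (by linarith)
                _ = c i := by field_simp
            have hL : max (0:ℝ) (lam - c i / V i y) = 0 :=
              max_eq_left (by linarith)
            have hmax : max (V i y) (c i / (2 * lam)) = c i / (2 * lam) :=
              max_eq_right hVk.le
            have hdd : c i / (c i / (2 * lam)) = 2 * lam := by field_simp
            rw [hL, hmax, hdd]
            have : max (0:ℝ) (lam - 2 * lam) = 0 := max_eq_left (by linarith)
            rw [this]
        · -- e ≤ 0 : Ψ = 0 and Φ = 0
          rw [hΨ₀ i y (le_of_not_gt hei)]
          have heV : V i y ≤ l i - aI i := by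
            have := le_of_not_gt hei
            rw [he] at this; linarith
          have hVc : V i y < c i / lam := by
            rw [lt_div_iff₀ hlam0]
            have h1 : V i y * lam ≤ (l i - aI i) * lam :=
              mul_le_mul_of_nonneg_right heV hlam0.le
            have := haI i
            have hc' : c i = lam * l i - (lam - 1) * aI i := rfl
            nlinarith
          have hkc : c i / (2 * lam) < c i / lam := by
            rw [div_lt_div_iff₀ (by linarith) hlam0]
            nlinarith
          have hmlt : max (V i y) (c i / (2 * lam)) < c i / lam :=
            max_lt hVc hkc
          have h2 : lam < c i / max (V i y) (c i / (2 * lam)) := by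
            rw [lt_div_iff₀ hkm]
            calc lam * max (V i y) (c i / (2 * lam)) < lam * (c i / lam) :=
                  mul_lt_mul_of_pos_left hmlt hlam0
              _ = c i := by field_simp
          rw [max_eq_left (by linarith), min_eq_right (by linarith : (0:ℝ) ≤ 1)]
  -- monotonicity of V
  have hVmono : ∀ i, Monotone fun y => V i y := by
    intro i y z hyz
    simp only [hV]
    refine Finset.sum_le_sum fun j _ => ?_
    refine mul_le_mul_of_nonneg_left ?_ (hx i j)
    refine mul_le_mul_of_nonneg_left ?_ (hp0 j).le
    exact Finset.sum_le_sum fun k _ => mul_le_mul_of_nonneg_left (hyz k) (hx k j)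
  -- monotonicity of Φ
  have hΦmono : Monotone Φ := by
    intro y z hyz
    intro i
    simp only [hΦ]
    by_cases hci : c i ≤ 0
    · simp [hci]
    · push_neg at hci
      simp only [if_neg (not_le.mpr hci)]
      have hk : 0 < c i / (2 * lam) := by positivity
      have hky : 0 < max (V i y) (c i / (2 * lam)) :=
        lt_of_lt_of_le hk (le_max_right _ _)
      have hmm : max (V i y) (c i / (2 * lam)) ≤ max (V i z) (c i / (2 * lam)) :=
        max_le_max (hVmono i hyz) le_rfl
      have hdiv : c i / max (V i z) (c i / (2 * lam)) ≤
          c i / max (V i y) (c i / (2 * lam)) :=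
        div_le_div_of_nonneg_left hci.le hky hmm
      exact min_le_min le_rfl (max_le_max le_rfl (by linarith))
  -- continuity of Φ
  have hVcont : ∀ i, Continuous fun y => V i y := by
    intro i
    have : (fun y => V i y) =
        fun y => ∑ j, x i j * (p0 j * ∑ k, x k j * y k) := funext fun y => hV i y
    rw [this]
    exact continuous_finset_sum _ fun j _ =>
      (continuous_const.mul (continuous_const.mul
        (continuous_finset_sum _ fun k _ =>
          continuous_const.mul (continuous_apply k))))
  have hΦcont : Continuous Φ := by
    refine continuous_pi fun i => ?_
    by_cases hci : c i ≤ 0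
    · simp only [hΦ, if_pos hci]; exact continuous_const
    · push_neg at hci
      simp only [hΦ, if_neg (not_le.mpr hci)]
      have hk : 0 < c i / (2 * lam) := by positivity
      have hden : Continuous fun y => max (V i y) (c i / (2 * lam)) :=
        (hVcont i).max continuous_const
      have hne : ∀ y : N → ℝ, max (V i y) (c i / (2 * lam)) ≠ 0 := fun y =>
        (lt_of_lt_of_le hk (le_max_right _ _)).ne'
      exact continuous_const.min (continuous_const.max
        (continuous_const.sub ((continuous_const.div hden hne))))
  constructor
  · intro y hy z hz hyz
    have h1 : Ψ y = Φ y := funext fun i => key y hy i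
    have h2 : Ψ z = Φ z := funext fun i => key z hz i
    rw [h1, h2]
    exact hΦmono hyz
  · exact hΦcont.continuousOn.congr fun y hy => funext fun i => key y hy i
end

section
/- For α = 1 and monotone increasing prices, the best response of a liquid agent maximizes y_i subject to the leverage constraint: if y_i* is a best response of agent i to y_{-i} and agent i is liquid (some feasible y_i exists with e_i > 0 and lev_i ≤ λ), then y_i* = max{ y_i ∈ [0,1] : e_i(y_i, y_{-i}) > 0 and lev_i(y_i, y_{-i}) ≤ λ }. -/
/-- For `α = 1` and monotone increasing prices, the best response
of a liquid agent maximizes `y_i` subject to the leverage constraint: if `yi*`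
is a (largest, by tie-breaking) best response of agent `i` to `y_{-i}` and the
feasible set is nonempty, then `yi*` is the maximum of the feasible set. -/
theorem stmt_14 {N M : Type*} [Fintype N] [DecidableEq N] [Fintype M]
    (x : N → M → ℝ) (aI l : N → ℝ) (lam : ℝ) (hlam : 1 < lam)
    (hx : ∀ i j, 0 ≤ x i j) (haI : ∀ i, 0 < aI i)
    (pfun : M → ℝ → ℝ) (hmono : ∀ j, Monotone (pfun j))
    (price : (N → ℝ) → M → ℝ)
    (hprice : ∀ y j, price y j = pfun j (∑ k, x k j * y k))
    -- α = 1 model quantities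
    (e a lev : N → (N → ℝ) → ℝ)
    (he : ∀ i y, e i y = aI i - l i + ∑ j, x i j * price y j)
    (ha : ∀ i y, a i y = aI i + y i * ∑ j, x i j * price y j)
    (hlev : ∀ i y, lev i y = a i y / e i y)
    (u : N → (N → ℝ) → EReal)
    (hu : ∀ i y, u i y =
      if (0 < e i y ∧ lev i y ≤ lam) ∨ y i = 0 then ((e i y : ℝ) : EReal) else ⊥)
    (i : N) (y : N → ℝ) (hy : ∀ k, y k ∈ Set.Icc (0:ℝ) 1)
    (F : Set ℝ)
    (hF : F = {t ∈ Set.Icc (0:ℝ) 1 | 0 < e i (Function.update y i t) ∧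
      lev i (Function.update y i t) ≤ lam})
    -- agent i is liquid: some feasible strategy exists; F is closed
    (hliquid : F.Nonempty) (hclosed : IsClosed F)
    (ystar : ℝ) (hstar : ystar ∈ Set.Icc (0:ℝ) 1)
    -- ystar is a best response, with ties broken toward larger y_i
    (hbr : ∀ t ∈ Set.Icc (0:ℝ) 1,
      u i (Function.update y i t) ≤ u i (Function.update y i ystar))
    (htie : ∀ t ∈ Set.Icc (0:ℝ) 1,
      u i (Function.update y i t) = u i (Function.update y i ystar) → t ≤ ystar) :
    IsGreatest F ystar := by

  -- monotonicity of e in the i-th coordinate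
  have emono : ∀ t s : ℝ, t ≤ s →
      e i (Function.update y i t) ≤ e i (Function.update y i s) := by
    intro t s hts
    rw [he, he]
    have : ∀ j, x i j * price (Function.update y i t) j ≤
        x i j * price (Function.update y i s) j := by
      intro j
      apply mul_le_mul_of_nonneg_left _ (hx i j)
      rw [hprice, hprice]
      apply hmono j
      apply Finset.sum_le_sum
      intro k _
      by_cases hk : k = i
      · subst hk; simp only [Function.update_self]
        exact mul_le_mul_of_nonneg_left hts (hx k j)
      · simp [Function.update_of_ne hk]
    have := Finset.sum_le_sum (fun j (_ : j ∈ Finset.univ) => this j)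
    linarith
  -- the max of F
  have hbdd : BddAbove F := by
    refine ⟨1, fun t ht => ?_⟩
    rw [hF] at ht; exact ht.1.2
  set t₀ := sSup F with ht₀def
  have ht₀F : t₀ ∈ F := hclosed.csSup_mem hliquid hbdd
  have ht₀Icc : t₀ ∈ Set.Icc (0:ℝ) 1 := by rw [hF] at ht₀F; exact ht₀F.1
  have ht₀cond : 0 < e i (Function.update y i t₀) ∧
      lev i (Function.update y i t₀) ≤ lam := by rw [hF] at ht₀F; exact ht₀F.2
  have hut₀ : u i (Function.update y i t₀) = ((e i (Function.update y i t₀) : ℝ) : EReal) := by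
    rw [hu]; simp [ht₀cond]
  -- u at ystar is not ⊥
  have hle := hbr t₀ ht₀Icc
  rw [hut₀] at hle
  have hcondstar : (0 < e i (Function.update y i ystar) ∧
      lev i (Function.update y i ystar) ≤ lam) ∨ Function.update y i ystar i = 0 := by
    by_contra h
    have hb : u i (Function.update y i ystar) = ⊥ := by rw [hu, if_neg h]
    rw [hb] at hle
    exact (EReal.coe_ne_bot _) (le_bot_iff.mp hle)
  have hustar : u i (Function.update y i ystar) =
      ((e i (Function.update y i ystar) : ℝ) : EReal) := by
    rw [hu, if_pos hcondstar]
  -- ystar ≤ t₀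
  have hysle : ystar ≤ t₀ := by
    rcases hcondstar with hcond | h0
    · apply le_csSup hbdd
      rw [hF]; exact ⟨hstar, hcond⟩
    · simp only [Function.update_self] at h0
      rw [h0]; exact ht₀Icc.1
  rw [hustar] at hle
  -- equality of utilities
  have hee : e i (Function.update y i ystar) = e i (Function.update y i t₀) := by
    have h1 := emono ystar t₀ hysle
    exact le_antisymm h1 (EReal.coe_le_coe_iff.mp hle)
  have hueq : u i (Function.update y i t₀) = u i (Function.update y i ystar) := by
    rw [hut₀, hustar, hee]
  have := htie t₀ ht₀Icc hueq
  have hys : ystar = t₀ := le_antisymm hysle this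
  rw [hys]
  exact ⟨ht₀F, fun t ht => le_csSup hbdd ht⟩
end

section
/- For convex price impact (any α ∈ [0,1]), every best response of an agent is attained at one of two points: either y_i = 0 (full liquidation) or y_i = y_i^max, the maximal strategy satisfying her leverage constraint given y_{-i}. -/
open scoped Classical

/-- With convex price impact (equity convex in the own strategy),
every best response of an agent is attained at `0` (full liquidation) or at
`ymax`, the maximal strategy satisfying her leverage constraint: the utility of
any strategy in `[0,1]` is dominated by the better of `u 0` and `u ymax`. -/
theorem stmt_15 (e : ℝ → ℝ) (u : ℝ → EReal) (F : Set ℝ) (ymax : ℝ)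
    -- equity of agent i as a function of her own strategy, convex on [0,1]
    (hconv : ConvexOn ℝ (Set.Icc 0 1) e)
    -- feasible set: strategies meeting the leverage constraint, plus 0
    (hF0 : (0:ℝ) ∈ F) (hFsub : F ⊆ Set.Icc 0 1)
    (hu : ∀ t, u t = if t ∈ F then ((e t : ℝ) : EReal) else ⊥)
    -- F ∩ (0,1] is a nonempty closed interval with maximum ymax
    (hne : (F ∩ Set.Ioc 0 1).Nonempty)
    (hInt : ∃ a : ℝ, 0 < a ∧ F ∩ Set.Ioc 0 1 = Set.Icc a ymax) :
    ∀ t ∈ Set.Icc (0:ℝ) 1, u t ≤ max (u 0) (u ymax) := by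
  obtain ⟨a, ha, hEq⟩ := hInt
  -- ymax ∈ F ∩ Ioc 0 1
  have hale : a ≤ ymax := by
    obtain ⟨x, hx⟩ := hne
    rw [hEq] at hx
    exact le_trans hx.1 hx.2
  have hymax : ymax ∈ F ∩ Set.Ioc 0 1 := by
    rw [hEq]; exact ⟨hale, le_refl _⟩
  have hymaxIcc : ymax ∈ Set.Icc (0:ℝ) 1 := hFsub hymax.1
  intro t ht
  rw [hu t, hu 0, hu ymax, if_pos hF0, if_pos hymax.1]
  by_cases htF : t ∈ F
  · rw [if_pos htF]
    rcases eq_or_lt_of_le (hFsub htF).1 with h0 | h0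
    · rw [← h0]; exact le_max_left _ _
    · have htI : t ∈ Set.Icc a ymax := by
        rw [← hEq]; exact ⟨htF, h0, (hFsub htF).2⟩
      have hseg : t ∈ segment ℝ (0:ℝ) ymax := by
        rw [segment_eq_Icc hymax.2.1.le]
        exact ⟨le_trans ha.le htI.1, htI.2⟩
      have := hconv.le_on_segment (Set.left_mem_Icc.2 zero_le_one)
        hymaxIcc hseg
      calc ((e t : ℝ) : EReal) ≤ ((max (e 0) (e ymax) : ℝ) : EReal) := EReal.coe_le_coe_iff.2 this
        _ = max ((e 0 : ℝ) : EReal) ((e ymax : ℝ) : EReal) := by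
              rcases le_total (e 0) (e ymax) with h | h
              · rw [max_eq_right h, max_eq_right (EReal.coe_le_coe_iff.2 h)]
              · rw [max_eq_left h, max_eq_left (EReal.coe_le_coe_iff.2 h)]
  · rw [if_neg htF]; exact bot_le
end

section
/- In the two-agent single-asset fire sale game with α = 1, linear price impact, p₁⁰ = 1, a₁^I = a₂^I = 1, l₁ = l₂ = 5/4, x₁₁ = x₂₁ = 1/2, and λ = 6: the profile y = (1,1) satisfies both leverage constraints with equality (lev_i(1,1) = 6), and under y₂ = 0 agent 1 is illiquid (no y₁ ∈ [0,1] satisfies e₁(y₁, 0) > 0 and lev₁(y₁, 0) ≤ 6 except y₁ = 0); consequently simultaneous best-response dynamics starting from (1,0) oscillates between (0,1) and (1,0). -/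
/-- In the two-agent single-asset fire sale game with `α = 1`,
linear price impact, `p₁⁰ = 1`, `aI = 1`, `l = 5/4`, `x = 1/2` each, `λ = 6`:
the profile `(1,1)` meets both leverage constraints with equality; under
`y₂ = 0` agent 1 has no nonzero feasible strategy; and simultaneous
best-response dynamics from `(1,0)` oscillates between `(0,1)` and `(1,0)`. -/
theorem stmt_16
    (e lev1 lev2 : ℝ → ℝ → ℝ)
    (he : ∀ y1 y2, e y1 y2 = 1 - 5/4 + (y1 + y2) / 4)
    (hlev1 : ∀ y1 y2, lev1 y1 y2 = (1 + y1 * (y1 + y2) / 4) / e y1 y2)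
    (hlev2 : ∀ y1 y2, lev2 y1 y2 = (1 + y2 * (y1 + y2) / 4) / e y1 y2)
    -- best responses: maximal feasible strategy, or 0 if none exists
    (Φ1 Φ2 : ℝ → ℝ → ℝ)
    (hΦ1 : ∀ y1 y2,
      ((∃ t ∈ Set.Icc (0:ℝ) 1, 0 < e t y2 ∧ lev1 t y2 ≤ 6) →
        IsGreatest {t ∈ Set.Icc (0:ℝ) 1 | 0 < e t y2 ∧ lev1 t y2 ≤ 6} (Φ1 y1 y2)) ∧
      ((¬ ∃ t ∈ Set.Icc (0:ℝ) 1, 0 < e t y2 ∧ lev1 t y2 ≤ 6) → Φ1 y1 y2 = 0))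
    (hΦ2 : ∀ y1 y2,
      ((∃ t ∈ Set.Icc (0:ℝ) 1, 0 < e y1 t ∧ lev2 y1 t ≤ 6) →
        IsGreatest {t ∈ Set.Icc (0:ℝ) 1 | 0 < e y1 t ∧ lev2 y1 t ≤ 6} (Φ2 y1 y2)) ∧
      ((¬ ∃ t ∈ Set.Icc (0:ℝ) 1, 0 < e y1 t ∧ lev2 y1 t ≤ 6) → Φ2 y1 y2 = 0))
    -- simultaneous best-response dynamics starting from (1,0)
    (y : ℕ → ℝ × ℝ) (h0 : y 0 = (1, 0))
    (hrec : ∀ t, y (t + 1) = (Φ1 (y t).1 (y t).2, Φ2 (y t).1 (y t).2)) :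
    (lev1 1 1 = 6 ∧ lev2 1 1 = 6) ∧
    (∀ t ∈ Set.Icc (0:ℝ) 1, t ≠ 0 → ¬ (0 < e t 0 ∧ lev1 t 0 ≤ 6)) ∧
    (∀ t, y (2 * t) = (1, 0) ∧ y (2 * t + 1) = (0, 1)) := by

  have hl1 : lev1 1 1 = 6 := by rw [hlev1, he]; norm_num
  have hl2 : lev2 1 1 = 6 := by rw [hlev2, he]; norm_num
  have hA : ¬ ∃ t ∈ Set.Icc (0:ℝ) 1, 0 < e t 0 ∧ lev1 t 0 ≤ 6 := by
    rintro ⟨t, ht, hpos, -⟩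
    rw [he] at hpos
    have := ht.2
    linarith
  have hB : ¬ ∃ t ∈ Set.Icc (0:ℝ) 1, 0 < e 0 t ∧ lev2 0 t ≤ 6 := by
    rintro ⟨t, ht, hpos, -⟩
    rw [he] at hpos
    have := ht.2
    linarith
  have hP1 : Φ1 1 0 = 0 := (hΦ1 1 0).2 hA
  have hP2 : Φ2 0 1 = 0 := (hΦ2 0 1).2 hB
  have hmem2 : (1:ℝ) ∈ {t ∈ Set.Icc (0:ℝ) 1 | 0 < e 1 t ∧ lev2 1 t ≤ 6} := by
    refine ⟨Set.mem_Icc.mpr ⟨zero_le_one, le_refl 1⟩, ?_, hl2.le⟩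
    rw [he]; norm_num
  have hQ2 : Φ2 1 0 = 1 := by
    obtain ⟨hm, hub⟩ := (hΦ2 1 0).1 ⟨1, hmem2.1, hmem2.2⟩
    have h1 : (1:ℝ) ≤ Φ2 1 0 := hub hmem2
    have h2 : Φ2 1 0 ≤ 1 := hm.1.2
    linarith
  have hmem1 : (1:ℝ) ∈ {t ∈ Set.Icc (0:ℝ) 1 | 0 < e t 1 ∧ lev1 t 1 ≤ 6} := by
    refine ⟨Set.mem_Icc.mpr ⟨zero_le_one, le_refl 1⟩, ?_, hl1.le⟩
    rw [he]; norm_num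
  have hQ1 : Φ1 0 1 = 1 := by
    obtain ⟨hm, hub⟩ := (hΦ1 0 1).1 ⟨1, hmem1.1, hmem1.2⟩
    have h1 : (1:ℝ) ≤ Φ1 0 1 := hub hmem1
    have h2 : Φ1 0 1 ≤ 1 := hm.1.2
    linarith
  refine ⟨⟨hl1, hl2⟩, ?_, ?_⟩
  · rintro t ht - ⟨hpos, -⟩
    rw [he] at hpos
    have := ht.2
    linarith
  · intro t
    induction t with
    | zero =>
      constructor
      · simpa using h0
      · have := hrec 0
        rw [h0] at this
        simp only [Nat.mul_zero, Nat.zero_add]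
        rw [this]
        simp [hP1, hQ2]
    | succ n ih =>
      have h2n1 : y (2 * n + 1) = (0, 1) := ih.2
      have h2n2 : y (2 * (n + 1)) = (1, 0) := by
        have := hrec (2 * n + 1)
        rw [h2n1] at this
        have heq : 2 * (n + 1) = 2 * n + 1 + 1 := by ring
        rw [heq, this]
        simp [hQ1, hP2]
      refine ⟨h2n2, ?_⟩
      have := hrec (2 * (n + 1))
      rw [h2n2] at this
      rw [this]
      simp [hP1, hQ2]
end

section
/- In the symmetric n-agent fire sale game with one asset, α = 1, linear price impact with p₁⁰ = n/2, x_{i1} = 1/n, l_i = a_i^I > 0, and λ = 2 a_i^I + 1: both y¹ = (1,...,1) and y⁰ = (0,...,0) are Nash equilibria for sufficiently large n, with social welfare sw(y¹) = n/2 and sw(y⁰) = 0. -/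
/-- Equity in the symmetric game: `e(y) = x_{i1} p₁(y) = (∑ y_k)/(2n)`. -/
noncomputable def fsEquity (n : ℕ) (y : Fin n → ℝ) : ℝ :=
  (∑ k, y k) / (2 * (n : ℝ))

/-- Assets of agent `i`: `a_i(y) = aI + y_i x_{i1} p₁(y)`. -/
noncomputable def fsAssets (aI : ℝ) (n : ℕ) (i : Fin n) (y : Fin n → ℝ) : ℝ :=
  aI + y i * fsEquity n y

/-- Utility with `α = 1` and leverage cap `λ = 2 aI + 1`. -/
noncomputable def fsUtil (aI : ℝ) (n : ℕ) (i : Fin n) (y : Fin n → ℝ) : EReal :=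
  if (0 < fsEquity n y ∧ fsAssets aI n i y / fsEquity n y ≤ 2 * aI + 1) ∨ y i = 0
  then ((fsEquity n y : ℝ) : EReal) else ⊥

/-! At `(1,…,1)` each agent's equity is `1/2` and its leverage is exactly `λ = 2 aI + 1`;
a deviation to `t ≤ 1` only lowers `∑ y_k`, hence the equity, which bounds the utility.
At `(0,…,0)` a deviation to `t ∈ (0,1]` has leverage `2 aI n / t + t > 2 aI n ≥ λ` once `n` is
large, so its utility is `⊥`. -/

open Filter Finset Function

variable {aI : ℝ} {n : ℕ}

def IsFsNashEquilibrium (aI : ℝ) (n : ℕ) (y : Fin n → ℝ) : Prop :=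
  ∀ i : Fin n, ∀ t ∈ Set.Icc (0 : ℝ) 1, fsUtil aI n i (update y i t) ≤ fsUtil aI n i y

theorem fsUtil_le_fsEquity (aI : ℝ) (i : Fin n) (y : Fin n → ℝ) :
    fsUtil aI n i y ≤ fsEquity n y := by
  unfold fsUtil
  split_ifs <;> simp

theorem fsEquity_mono {y y' : Fin n → ℝ} (h : y ≤ y') : fsEquity n y ≤ fsEquity n y' :=
  div_le_div_of_nonneg_right (sum_le_sum fun k _ => h k) (by positivity)

theorem fsEquity_const (hn : n ≠ 0) (c : ℝ) : fsEquity n (fun _ => c) = c / 2 := by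
  simp only [fsEquity, sum_const, card_univ, Fintype.card_fin, nsmul_eq_mul]
  field_simp

theorem fsEquity_update_zero (i : Fin n) (t : ℝ) :
    fsEquity n (update (fun _ => 0) i t) = t / (2 * n) := by
  simp [fsEquity, sum_update_of_mem (mem_univ i)]

theorem fsUtil_const_one (aI : ℝ) (i : Fin n) :
    fsUtil aI n i (fun _ => 1) = ((1 / 2 : ℝ) : EReal) := by
  have he : fsEquity n (fun _ => 1) = 1 / 2 := fsEquity_const i.pos.ne' 1
  have hlev : fsAssets aI n i (fun _ => 1) / fsEquity n (fun _ => 1) = 2 * aI + 1 := by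
    rw [fsAssets, he]
    ring
  rw [fsUtil, if_pos (Or.inl ⟨by rw [he]; norm_num, hlev.le⟩), he]

theorem fsUtil_const_zero (aI : ℝ) (i : Fin n) : fsUtil aI n i (fun _ => 0) = 0 := by
  simp [fsUtil, fsEquity]

theorem fsAssets_div_fsEquity_update_zero (hn : n ≠ 0) (i : Fin n) {t : ℝ} (ht : t ≠ 0) :
    fsAssets aI n i (update (fun _ => 0) i t) / fsEquity n (update (fun _ => 0) i t) =
      2 * aI * n / t + t := by
  rw [fsAssets, fsEquity_update_zero, update_self]
  field_simp

theorem fsUtil_update_zero_eq_bot (haI : 0 < aI) (hbig : 2 * aI + 1 ≤ 2 * aI * n) (i : Fin n)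
    {t : ℝ} (ht0 : 0 < t) (ht1 : t ≤ 1) : fsUtil aI n i (update (fun _ => 0) i t) = ⊥ := by
  have hlev : 2 * aI + 1 < 2 * aI * n / t + t :=
    calc 2 * aI + 1 ≤ 2 * aI * n := hbig
      _ ≤ 2 * aI * n / t := le_div_self (by positivity) ht0 ht1
      _ < 2 * aI * n / t + t := lt_add_of_pos_right _ ht0
  rw [fsUtil, if_neg]
  rw [fsAssets_div_fsEquity_update_zero i.pos.ne' i ht0.ne', update_self]
  push Not
  exact ⟨fun _ => hlev, ht0.ne'⟩

theorem isFsNashEquilibrium_one (aI : ℝ) (n : ℕ) : IsFsNashEquilibrium aI n (fun _ => 1) := by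
  intro i t ht
  calc fsUtil aI n i (update (fun _ => 1) i t)
      ≤ fsEquity n (update (fun _ => 1) i t) := fsUtil_le_fsEquity aI i _
    _ ≤ fsEquity n (fun _ => 1) :=
        EReal.coe_le_coe_iff.mpr (fsEquity_mono (update_le_iff.mpr ⟨ht.2, fun _ _ => le_rfl⟩))
    _ = fsUtil aI n i (fun _ => 1) := by rw [fsUtil_const_one, fsEquity_const i.pos.ne']

theorem isFsNashEquilibrium_zero (haI : 0 < aI) (hbig : 2 * aI + 1 ≤ 2 * aI * n) :
    IsFsNashEquilibrium aI n (fun _ => 0) := by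
  rintro i t ⟨ht0, ht1⟩
  rcases ht0.eq_or_lt with rfl | ht0
  · simp
  · rw [fsUtil_update_zero_eq_bot haI hbig i ht0 ht1]
    exact bot_le

theorem sum_fsUtil_const_one (aI : ℝ) (n : ℕ) :
    ∑ i : Fin n, fsUtil aI n i (fun _ => 1) = (((n : ℝ) / 2 : ℝ) : EReal) := by
  simp only [fsUtil_const_one, sum_const, card_univ, Fintype.card_fin, ← EReal.coe_nsmul,
    nsmul_eq_mul]
  ring_nf

theorem sum_fsUtil_const_zero (aI : ℝ) (n : ℕ) : ∑ i : Fin n, fsUtil aI n i (fun _ => 0) = 0 := by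
  simp only [fsUtil_const_zero, sum_const_zero]

theorem eventually_two_mul_add_one_le (haI : 0 < aI) :
    ∀ᶠ n : ℕ in atTop, 2 * aI + 1 ≤ 2 * aI * n := by
  filter_upwards [tendsto_natCast_atTop_atTop.eventually_ge_atTop ((2 * aI + 1) / (2 * aI))]
    with n hn
  rwa [div_le_iff₀' (by positivity)] at hn

/-- In the symmetric `n`-agent one-asset game with `α = 1`,
linear price impact, `p₁⁰ = n/2`, `x_{i1} = 1/n`, `l_i = a_i^I > 0` and
`λ = 2 a_i^I + 1`, for all sufficiently large `n` both `(1,…,1)` and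
`(0,…,0)` are Nash equilibria, with social welfare `n/2` and `0`
respectively. -/
theorem stmt_18 (aI : ℝ) (haI : 0 < aI) :
    ∃ n0 : ℕ, ∀ n : ℕ, n0 ≤ n →
      -- (1,…,1) is a Nash equilibrium
      (∀ i : Fin n, ∀ t ∈ Set.Icc (0:ℝ) 1,
        fsUtil aI n i (Function.update (fun _ => 1) i t) ≤
          fsUtil aI n i (fun _ => 1)) ∧
      -- (0,…,0) is a Nash equilibrium
      (∀ i : Fin n, ∀ t ∈ Set.Icc (0:ℝ) 1,
        fsUtil aI n i (Function.update (fun _ => 0) i t) ≤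
          fsUtil aI n i (fun _ => 0)) ∧
      -- social welfare of the two equilibria
      (∑ i : Fin n, fsUtil aI n i (fun _ => 1)) = (((n : ℝ) / 2 : ℝ) : EReal) ∧
      (∑ i : Fin n, fsUtil aI n i (fun _ => 0)) = (0 : EReal) := by
  obtain ⟨n0, hn0⟩ := eventually_atTop.mp (eventually_two_mul_add_one_le haI)
  exact ⟨n0, fun n hn => ⟨isFsNashEquilibrium_one aI n, isFsNashEquilibrium_zero haI (hn0 n hn),
    sum_fsUtil_const_one aI n, sum_fsUtil_const_zero aI n⟩⟩
end
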